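/- arXiv:2001.09965 — 2 statements merged into one kernel-verified Lean document; each statement's English description precedes it below -/
import Mathlib

section
/- Let c = a + ib with a, b ∈ ℝ, b ≠ 0, and q ∈ ℂ with Re(q)/b ∈ (1/2)ℤ and Im(q) + Re(q)·a/b ∉ ℤ. Then there exists K > 0 such that |k + cm - iq| ≥ K for all k ∈ ℤ and m ∈ (1/2)ℤ. -/
open Complex Real

/-! Write `Re q = b n₀ / 2` and `z = k + c (n / 2) - i q`, so that `Im z = b (n - n₀) / 2`.
If `n ≠ n₀` this gives `|z| ≥ |b| / 2`. If `n = n₀`, then `Re z = k + x` with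
`x = Im q + Re q · a / b ∉ ℤ`, and `|k + x|` is at least the distance `|x - round x| > 0`
from `x` to the nearest integer. -/

theorem exists_pos_forall_le_abs_intCast_add {α : Type*} [Ring α] [LinearOrder α]
    [IsStrictOrderedRing α] [FloorRing α] {x : α} (hx : ¬∃ n : ℤ, x = n) :
    ∃ δ > 0, ∀ k : ℤ, δ ≤ |(k : α) + x| := by
  refine ⟨|x - round x|, abs_pos.2 (sub_ne_zero.2 fun h => hx ⟨_, h⟩), fun k => ?_⟩
  calc |x - round x| ≤ |x - ((-k : ℤ) : α)| := round_le x (-k)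
    _ = |(k : α) + x| := by push_cast; rw [sub_neg_eq_add, add_comm]

theorem abs_le_abs_mul_intCast_sub {α : Type*} [Ring α] [LinearOrder α] [IsStrictOrderedRing α]
    (b : α) {m n : ℤ} (h : m ≠ n) : |b| ≤ |b * ((m : α) - n)| := by
  have hmn : (1 : α) ≤ |(m : α) - n| := by
    exact_mod_cast Int.one_le_abs (sub_ne_zero.2 h)
  rw [abs_mul]
  exact le_mul_of_one_le_right (abs_nonneg b) hmn

theorem Complex.re_ofReal_add_mul_sub_I_mul (t a b x : ℝ) (q : ℂ) :
    ((t : ℂ) + (a + b * I) * x - I * q).re = t + a * x + q.im := by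
  simp

theorem Complex.im_ofReal_add_mul_sub_I_mul (t a b x : ℝ) (q : ℂ) :
    ((t : ℂ) + (a + b * I) * x - I * q).im = b * x - q.re := by
  simp

/-- If `b ≠ 0`, `Re(q)/b ∈ (1/2)ℤ` and `Im(q) + Re(q)·a/b ∉ ℤ`, then
`|k + cm - iq|` is uniformly bounded below over `k ∈ ℤ`, `m ∈ (1/2)ℤ`. -/
theorem uniform_lower_bound_of_halfInteger_not_int (a b : ℝ) (q : ℂ)
    (hb : b ≠ 0) (hq1 : ∃ n : ℤ, q.re / b = (n : ℝ) / 2)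
    (hq2 : ¬∃ n : ℤ, q.im + q.re * a / b = (n : ℝ)) :
    ∃ K : ℝ, 0 < K ∧ ∀ (k n : ℤ),
      K ≤ ‖((k : ℂ) + ((a : ℂ) + (b : ℂ) * Complex.I) * ((n : ℂ) / 2)
            - Complex.I * q)‖ := by
  obtain ⟨n₀, hn₀⟩ := hq1
  have hq_re : q.re = b * (n₀ / 2) := by rw [← hn₀, mul_div_cancel₀ _ hb]
  have hq_re_a : q.re * a / b = a * (n₀ / 2) := by rw [hq_re]; field_simp
  obtain ⟨δ, hδ, hδ_le⟩ := exists_pos_forall_le_abs_intCast_add hq2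
  refine ⟨min (|b| / 2) δ, by positivity, fun k n => ?_⟩
  have hz : (k : ℂ) + (a + b * I) * ((n : ℂ) / 2) - I * q
      = ((k : ℝ) : ℂ) + (a + b * I) * ((n / 2 : ℝ) : ℂ) - I * q := by push_cast; rfl
  rw [hz]
  rcases eq_or_ne n n₀ with rfl | hn
  · calc min (|b| / 2) δ ≤ δ := min_le_right _ _
      _ ≤ |(k : ℝ) + (q.im + q.re * a / b)| := hδ_le k
      _ = |(k : ℝ) + a * (n / 2) + q.im| := by rw [hq_re_a]; ring_nf
      _ ≤ _ := by rw [← re_ofReal_add_mul_sub_I_mul]; exact abs_re_le_norm _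
  · calc min (|b| / 2) δ ≤ |b| / 2 := min_le_left _ _
      _ ≤ |b * ((n : ℝ) - n₀)| / 2 :=
          div_le_div_of_nonneg_right (abs_le_abs_mul_intCast_sub b hn) zero_le_two
      _ = |b * (n / 2) - q.re| := by
          rw [hq_re, ← mul_sub, ← sub_div, abs_mul, abs_mul, abs_div, abs_two]; ring
      _ ≤ _ := by rw [← im_ofReal_add_mul_sub_I_mul]; exact abs_im_le_norm _
end

section
/- Let b : ℝ → ℝ be a continuous 2π-periodic function and B(t) = ∫₀^t b(s) ds. Suppose b(0) = 0, b is real analytic with B(u) > 0 for all u with 0 < |u| < δ* for some δ* > 0, B'(0) = 0, and B is twice continuously differentiable. Let M = max_{t ∈ [0,2π]} B(t). Then there exists K > 0 such that φ(t,s) := B(t) - B(t-s) - M - K(1 - cos(t-s)) ≤ 0 for all t, s ∈ [0, 2π]. -/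
open Real

/-- Key lemma for building singular solutions: with `B(t) = ∫₀^t b`, `b(0) = 0`,
`B > 0` near (and off) `0`, `M = max_{[0,2π]} B > 0` and `B(2π) = 2πb₀ ≤ 0`,
there is `K > 0` with `B(t) - B(t-s) - M - K(1 - cos(t-s)) ≤ 0` on `[0,2π]²`. -/
theorem phi_nonpos (b B : ℝ → ℝ) (M : ℝ)
    (hb : Continuous b) (hbp : Function.Periodic b (2 * Real.pi))
    (hB : ∀ t, B t = ∫ s in (0 : ℝ)..t, b s)
    (hb0 : b 0 = 0) (hB' : deriv B 0 = 0) (hB2 : ContDiff ℝ 2 B)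
    (hpos : ∃ δstar : ℝ, 0 < δstar ∧ ∀ u : ℝ, 0 < |u| → |u| < δstar → 0 < B u)
    (hM : IsGreatest (B '' Set.Icc 0 (2 * Real.pi)) M)
    (hMpos : 0 < M) (hb₀ : B (2 * Real.pi) ≤ 0) :
    ∃ K : ℝ, 0 < K ∧ ∀ t ∈ Set.Icc (0 : ℝ) (2 * Real.pi),
      ∀ s ∈ Set.Icc (0 : ℝ) (2 * Real.pi),
        B t - B (t - s) - M - K * (1 - Real.cos (t - s)) ≤ 0 := by
  have hπ : 0 < Real.pi := Real.pi_pos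
  have hπ3 : (3 : ℝ) < Real.pi := Real.pi_gt_three
  have hBcont : Continuous B := hB2.continuous
  have hB0 : B 0 = 0 := by rw [hB]; simp
  have hint : ∀ a c : ℝ, IntervalIntegrable b MeasureTheory.volume a c :=
    fun a c => hb.intervalIntegrable a c
  -- quasi-periodicity of B
  have hBadd : ∀ x : ℝ, B (x + 2 * Real.pi) = B x + B (2 * Real.pi) := by
    intro x
    have h1 : (∫ s in (0:ℝ)..(x + 2*Real.pi), b s)
        = (∫ s in (0:ℝ)..x, b s) + ∫ s in x..(x + 2*Real.pi), b s :=
      (intervalIntegral.integral_add_adjacent_intervals (hint 0 x) (hint x _)).symm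
    have h2 : (∫ s in x..(x + 2*Real.pi), b s) = ∫ s in (0:ℝ)..(0 + 2*Real.pi), b s :=
      hbp.intervalIntegral_add_eq x 0
    simp only [hB]
    rw [h1, h2, zero_add]
  obtain ⟨δs, hδs, hposB⟩ := hpos
  have hBnn : ∀ v : ℝ, |v| < δs → 0 ≤ B v := by
    intro v hv
    rcases eq_or_ne v 0 with rfl | hv0
    · simp [hB0]
    · exact (hposB v (abs_pos.mpr hv0) hv).le
  -- continuity at 2π
  obtain ⟨δ₀, hδ₀, hcont⟩ :=
    Metric.continuousAt_iff.mp (hBcont.continuousAt (x := 2 * Real.pi)) M hMpos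
  -- uniform bound for B on [-2π, 2π]
  obtain ⟨C, hC⟩ := (isCompact_Icc (a := -(2*Real.pi))
    (b := 2*Real.pi)).exists_bound_of_continuousOn hBcont.continuousOn
  have hC0 : 0 ≤ C := le_trans (norm_nonneg _) (hC 0 ⟨by linarith, by linarith⟩)
  -- the small parameter δ
  set δ : ℝ := min (min δs δ₀) 1 with hδdef
  have hδpos : 0 < δ := lt_min (lt_min hδs hδ₀) one_pos
  have hδ1 : δ ≤ 1 := min_le_right _ _
  have hδs' : δ ≤ δs := le_trans (min_le_left _ _) (min_le_left _ _)
  have hδ0' : δ ≤ δ₀ := le_trans (min_le_left _ _) (min_le_right _ _)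
  -- a positive lower bound for 1 - cos on the intermediate region
  set S : Set ℝ := Set.Icc (-(2*Real.pi)) (2*Real.pi) ∩
      ({u : ℝ | δ ≤ |u|} ∩ {u : ℝ | |u| ≤ 2*Real.pi - δ}) with hSdef
  have hScompact : IsCompact S :=
    isCompact_Icc.inter_right
      ((isClosed_le continuous_const continuous_abs).inter
        (isClosed_le continuous_abs continuous_const))
  have hSne : S.Nonempty := by
    refine ⟨δ, ⟨⟨by linarith, by linarith⟩, ?_, ?_⟩⟩
    · show δ ≤ |δ|; rw [abs_of_pos hδpos]
    · show |δ| ≤ 2*Real.pi - δ; rw [abs_of_pos hδpos]; linarith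
  obtain ⟨u₀, hu₀S, hu₀min⟩ := hScompact.exists_isMinOn hSne
    ((continuous_const.sub Real.continuous_cos).continuousOn)
  have hc : 0 < 1 - Real.cos u₀ := by
    rcases (Real.cos_le_one u₀).lt_or_eq with h | h
    · linarith
    · exfalso
      obtain ⟨n, hn⟩ := (Real.cos_eq_one_iff u₀).mp h
      have habs : |u₀| = |(n : ℝ)| * (2 * Real.pi) := by
        rw [← hn, abs_mul, abs_of_pos (by linarith : (0:ℝ) < 2 * Real.pi)]
      rcases eq_or_ne n 0 with rfl | hn0
      · have h1 : δ ≤ |u₀| := hu₀S.2.1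
        rw [← hn] at h1
        simp at h1
        linarith
      · have h1 : (1 : ℝ) ≤ |(n : ℝ)| := by
          have := Int.one_le_abs hn0
          calc (1:ℝ) = ((1:ℤ):ℝ) := by norm_num
          _ ≤ ((|n| : ℤ) : ℝ) := by exact_mod_cast this
          _ = |(n:ℝ)| := by push_cast; ring
        have h2 : |u₀| ≤ 2*Real.pi - δ := hu₀S.2.2
        nlinarith
  set c : ℝ := 1 - Real.cos u₀ with hcdef
  -- the constant K
  refine ⟨max 1 (C / c), lt_of_lt_of_le one_pos (le_max_left _ _), ?_⟩
  set K : ℝ := max 1 (C / c) with hKdef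
  have hKnn : 0 ≤ K := le_trans zero_le_one (le_max_left _ _)
  intro t ht s hs
  set u : ℝ := t - s with hu
  have hul : -(2*Real.pi) ≤ u := by simp only [hu]; cases ht; cases hs; linarith
  have huu : u ≤ 2*Real.pi := by simp only [hu]; cases ht; cases hs; linarith
  have hcosle : Real.cos u ≤ 1 := Real.cos_le_one u
  have hKcos : 0 ≤ K * (1 - Real.cos u) := mul_nonneg hKnn (by linarith)
  have hBtM : B t ≤ M := hM.2 ⟨t, ht, rfl⟩
  by_cases h1 : |u| < δ
  · -- u near 0
    have hBu : 0 ≤ B u := hBnn u (lt_of_lt_of_le h1 hδs')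
    linarith
  · by_cases h2 : 2*Real.pi - δ < u
    · -- u near 2π : then t is near 2π
      have hts : u ≤ t := by simp only [hu]; cases hs; linarith
      have htd : dist t (2*Real.pi) < δ₀ := by
        rw [Real.dist_eq, abs_of_nonpos (by cases ht; linarith)]
        cases ht; linarith
      have hBt : |B t - B (2*Real.pi)| < M := by
        have := hcont htd; rwa [Real.dist_eq] at this
      have hBt' : B t < B (2*Real.pi) + M := by
        have := (abs_lt.mp hBt).2; linarith
      have hBueq : B u = B (u - 2*Real.pi) + B (2*Real.pi) := by
        have := hBadd (u - 2*Real.pi)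
        rwa [sub_add_cancel] at this
      have hBum : 0 ≤ B (u - 2*Real.pi) := by
        apply hBnn
        rw [abs_of_nonpos (by linarith)]
        linarith
      linarith
    · by_cases h3 : u < -(2*Real.pi - δ)
      · -- u near -2π
        have hBueq : B (u + 2*Real.pi) = B u + B (2*Real.pi) := hBadd u
        have hBum : 0 ≤ B (u + 2*Real.pi) := by
          apply hBnn
          rw [abs_of_nonneg (by linarith)]
          linarith
        have hBu : 0 ≤ B u := by linarith
        linarith
      · -- intermediate region
        push_neg at h1 h2 h3
        have huS : u ∈ S := ⟨⟨hul, huu⟩, h1, abs_le.mpr ⟨by linarith, h2⟩⟩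
        have hcu : c ≤ 1 - Real.cos u := hu₀min huS
        have hKC : C ≤ K * (1 - Real.cos u) := by
          calc C = (C / c) * c := (div_mul_cancel₀ C (ne_of_gt hc)).symm
          _ ≤ K * c := mul_le_mul_of_nonneg_right (le_max_right _ _) hc.le
          _ ≤ K * (1 - Real.cos u) := mul_le_mul_of_nonneg_left hcu hKnn
        have hBu : -C ≤ B u := by
          have := hC u ⟨hul, huu⟩
          rw [Real.norm_eq_abs] at this
          linarith [(abs_le.mp this).1]
        linarith
end
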